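/- Strong law of large numbers for triangular arrays: Let {X_{n,i} : 1 ≤ i ≤ 2^n, n ∈ ℕ} be a triangular array of identically distributed, real-valued, integrable, mean-zero random variables on a probability space, such that for each fixed n the collection {X_{n,i} : 1 ≤ i ≤ 2^n} is independent. Then 2^{-n}(X_{n,1} + ⋯ + X_{n,2^n}) → 0 almost surely as n → ∞. -/

import Mathlib

/-!
Truncate row `n` at level `2 ^ n`. Since `∑ₙ 2ⁿ P(|X| ≥ 2ⁿ) ≤ 2 E|X|`, a union bound over each row
and Borel–Cantelli show that almost surely no entry is changed by the truncation from some row on.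
The truncated row sum has variance at most `2ⁿ E[X²; |X| ≤ 2ⁿ]` and
`∑ₙ 2⁻ⁿ E[X²; |X| ≤ 2ⁿ] ≤ 2 E|X|`, so Chebyshev's inequality and Borel–Cantelli again give that
the centred truncated row averages tend to zero almost surely, while the truncated means tend to
`E X = 0`. Every estimate concerns a single row, and only the convergent half of Borel–Cantelli
is used.
-/

open MeasureTheory ProbabilityTheory Filter Finset
open scoped ENNReal Topology

lemma tsum_ite_two_pow_le_two_mul (y : ℝ) :
    ∑' n : ℕ, (if (2 : ℝ) ^ n ≤ y then (2 : ℝ≥0∞) ^ n else 0) ≤ ENNReal.ofReal (2 * y) := by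
  rcases lt_or_ge y 1 with hy | hy
  · have hnone : ∀ n : ℕ, ¬(2 : ℝ) ^ n ≤ y := fun n h =>
      (hy.trans_le (one_le_pow₀ one_le_two)).not_ge h
    simp [hnone]
  obtain ⟨m, hm, hm'⟩ := exists_nat_pow_near hy one_lt_two
  have hsupp : ∀ n ∉ range (m + 1), (if (2 : ℝ) ^ n ≤ y then (2 : ℝ≥0∞) ^ n else 0) = 0 := by
    intro n hn
    have : (2 : ℝ) ^ (m + 1) ≤ 2 ^ n := pow_le_pow_right₀ one_le_two (by simpa using hn)
    exact if_neg (by linarith)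
  rw [tsum_eq_sum hsupp]
  calc ∑ n ∈ range (m + 1), (if (2 : ℝ) ^ n ≤ y then (2 : ℝ≥0∞) ^ n else 0)
      ≤ ∑ n ∈ range (m + 1), (2 : ℝ≥0∞) ^ n := sum_le_sum fun n _ => by split_ifs <;> simp
    _ ≤ 2 ^ (m + 1) := by
      exact_mod_cast (Nat.geomSum_lt le_rfl fun k hk => mem_range.1 hk).le
    _ = ENNReal.ofReal (2 * 2 ^ m) := by simp [ENNReal.ofReal_mul, pow_succ']
    _ ≤ ENNReal.ofReal (2 * y) := ENNReal.ofReal_le_ofReal (by linarith)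

lemma tsum_ite_inv_two_pow (k : ℕ) :
    ∑' n : ℕ, (if k ≤ n then ((2 : ℝ≥0∞) ^ n)⁻¹ else 0) = 2 * ((2 : ℝ≥0∞) ^ k)⁻¹ := by
  rw [← ENNReal.summable.sum_add_tsum_nat_add' (k := k),
    sum_eq_zero fun n hn => if_neg (by simpa using hn), zero_add]
  have hterm : ∀ n : ℕ, ((2 : ℝ≥0∞) ^ (n + k))⁻¹ = 2⁻¹ ^ n * (2 ^ k)⁻¹ := fun n => by
    rw [pow_add, ENNReal.mul_inv (by simp) (by simp), ENNReal.inv_pow]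
  simp_rw [if_pos (Nat.le_add_left k _), hterm, ENNReal.tsum_mul_right, ENNReal.tsum_geometric,
    ENNReal.one_sub_inv_two, inv_inv]

lemma tsum_ite_sq_div_two_pow_le_two_mul_abs (y : ℝ) :
    ∑' n : ℕ, (if |y| ≤ (2 : ℝ) ^ n then ENNReal.ofReal (y ^ 2 / 2 ^ n) else 0)
      ≤ ENNReal.ofReal (2 * |y|) := by
  have hex : ∃ k : ℕ, |y| ≤ 2 ^ k := (pow_unbounded_of_one_lt _ one_lt_two).imp fun _ => le_of_lt
  set k := Nat.find hex
  calc ∑' n : ℕ, (if |y| ≤ (2 : ℝ) ^ n then ENNReal.ofReal (y ^ 2 / 2 ^ n) else 0)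
      ≤ ∑' n : ℕ, ENNReal.ofReal (y ^ 2) * (if k ≤ n then ((2 : ℝ≥0∞) ^ n)⁻¹ else 0) := by
        refine ENNReal.tsum_le_tsum fun n => ?_
        split_ifs with h hkn
        · rw [ENNReal.ofReal_div_of_pos (by positivity)]
          simp [div_eq_mul_inv]
        · exact absurd (Nat.find_min' hex h) hkn
        all_goals simp
    _ = ENNReal.ofReal (y ^ 2 / 2 ^ k * 2) := by
      rw [ENNReal.tsum_mul_left, tsum_ite_inv_two_pow, ENNReal.ofReal_mul (by positivity),
        ENNReal.ofReal_div_of_pos (by positivity)]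
      simp only [ENNReal.ofReal_pow zero_le_two, ENNReal.ofReal_ofNat, div_eq_mul_inv]
      ring
    _ ≤ ENNReal.ofReal (2 * |y|) := by
      refine ENNReal.ofReal_le_ofReal ?_
      have hk : |y| ≤ 2 ^ k := Nat.find_spec hex
      rw [div_mul_eq_mul_div, div_le_iff₀ (by positivity), ← sq_abs]
      nlinarith [abs_nonneg y]

section

variable {Ω : Type*} [MeasurableSpace Ω] {μ : Measure Ω}

lemma tsum_two_pow_mul_measure_le_abs_ne_top {Y : Ω → ℝ} (hY : Integrable Y μ) :
    ∑' n : ℕ, 2 ^ n * μ {ω | (2 : ℝ) ^ n ≤ |Y ω|} ≠ ∞ := by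
  have hset : ∀ n : ℕ, NullMeasurableSet {ω | (2 : ℝ) ^ n ≤ |Y ω|} μ := fun n =>
    nullMeasurableSet_le aemeasurable_const hY.aemeasurable.abs
  refine (lt_of_le_of_lt ?_ (hY.abs.const_mul 2).lintegral_lt_top).ne
  calc ∑' n : ℕ, 2 ^ n * μ {ω | (2 : ℝ) ^ n ≤ |Y ω|}
      = ∑' n : ℕ, ∫⁻ ω, {ω | (2 : ℝ) ^ n ≤ |Y ω|}.indicator (fun _ => (2 : ℝ≥0∞) ^ n) ω ∂μ := by
        simp_rw [lintegral_indicator_const₀ (hset _)]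
    _ = ∫⁻ ω, ∑' n : ℕ, {ω | (2 : ℝ) ^ n ≤ |Y ω|}.indicator (fun _ => (2 : ℝ≥0∞) ^ n) ω ∂μ :=
        (lintegral_tsum fun n => aemeasurable_const.indicator₀ (hset n)).symm
    _ ≤ ∫⁻ ω, ENNReal.ofReal (2 * |Y ω|) ∂μ :=
        lintegral_mono fun ω => by
          simpa only [Set.indicator_apply, Set.mem_ofPred_eq] using
            tsum_ite_two_pow_le_two_mul |Y ω|

lemma ae_eventually_forall_abs_lt_two_pow {X : ℕ → ℕ → Ω → ℝ} {Y : Ω → ℝ}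
    (hY : Integrable Y μ) (hXY : ∀ n i, i < 2 ^ n → IdentDistrib (X n i) Y μ μ) :
    ∀ᵐ ω ∂μ, ∀ᶠ n in atTop, ∀ i < 2 ^ n, |X n i ω| < 2 ^ n := by
  have hrow : ∀ n : ℕ, μ (⋃ i ∈ range (2 ^ n), {ω | (2 : ℝ) ^ n ≤ |X n i ω|})
      ≤ 2 ^ n * μ {ω | (2 : ℝ) ^ n ≤ |Y ω|} := fun n => by
    have hset : MeasurableSet {x : ℝ | (2 : ℝ) ^ n ≤ |x|} :=
      measurableSet_le measurable_const measurable_abs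
    calc μ (⋃ i ∈ range (2 ^ n), {ω | (2 : ℝ) ^ n ≤ |X n i ω|})
        ≤ ∑ i ∈ range (2 ^ n), μ {ω | (2 : ℝ) ^ n ≤ |X n i ω|} := measure_biUnion_finset_le _ _
      _ = ∑ i ∈ range (2 ^ n), μ {ω | (2 : ℝ) ^ n ≤ |Y ω|} :=
        sum_congr rfl fun i hi => (hXY n i (mem_range.1 hi)).measure_mem_eq hset
      _ = 2 ^ n * μ {ω | (2 : ℝ) ^ n ≤ |Y ω|} := by simp
  filter_upwards [ae_eventually_notMem ((ENNReal.tsum_le_tsum hrow).trans_lt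
    (tsum_two_pow_mul_measure_le_abs_ne_top hY).lt_top).ne] with ω hω
  filter_upwards [hω] with n hn i hi
  by_contra! h
  exact hn (Set.mem_iUnion₂.2 ⟨i, mem_range.2 hi, h⟩)

lemma summable_integral_sq_truncation_two_pow_div [IsFiniteMeasure μ] {Y : Ω → ℝ}
    (hY : Integrable Y μ) :
    Summable fun n : ℕ => (∫ ω, truncation Y (2 ^ n) ω ^ 2 ∂μ) / 2 ^ n := by
  have hnonneg : ∀ n : ℕ, 0 ≤ (∫ ω, truncation Y (2 ^ n) ω ^ 2 ∂μ) / 2 ^ n := fun n =>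
    div_nonneg (integral_nonneg fun ω => sq_nonneg _) (by positivity)
  have hpoint : ∀ (n : ℕ) (ω : Ω), ENNReal.ofReal (truncation Y (2 ^ n) ω ^ 2 / 2 ^ n)
      ≤ if |Y ω| ≤ (2 : ℝ) ^ n then ENNReal.ofReal (Y ω ^ 2 / 2 ^ n) else 0 := fun n ω => by
    split_ifs with h
    · refine ENNReal.ofReal_le_ofReal (div_le_div_of_nonneg_right ?_ (by positivity))
      exact sq_le_sq.2 (abs_truncation_le_abs_self _ _ _)
    · have hout : Y ω ∉ Set.Ioc (-(2 : ℝ) ^ n) (2 ^ n) := fun hmem =>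
        h (abs_le.2 ⟨hmem.1.le, hmem.2⟩)
      simp [truncation, hout]
  refine (ENNReal.summable_toReal ?_).congr fun n => ENNReal.toReal_ofReal (hnonneg n)
  refine (lt_of_le_of_lt ?_ (hY.abs.const_mul 2).lintegral_lt_top).ne
  calc ∑' n : ℕ, ENNReal.ofReal ((∫ ω, truncation Y (2 ^ n) ω ^ 2 ∂μ) / 2 ^ n)
      = ∑' n : ℕ, ∫⁻ ω, ENNReal.ofReal (truncation Y (2 ^ n) ω ^ 2 / 2 ^ n) ∂μ := by
        refine tsum_congr fun n => ?_
        rw [← integral_div]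
        exact ofReal_integral_eq_lintegral_ofReal
          (hY.1.memLp_truncation.integrable_sq.div_const _)
          (Eventually.of_forall fun ω => by positivity)
    _ = ∫⁻ ω, ∑' n : ℕ, ENNReal.ofReal (truncation Y (2 ^ n) ω ^ 2 / 2 ^ n) ∂μ :=
        (lintegral_tsum fun n =>
          ((hY.1.truncation.aemeasurable.pow_const 2).div_const _).ennreal_ofReal).symm
    _ ≤ ∫⁻ ω, ENNReal.ofReal (2 * |Y ω|) ∂μ := lintegral_mono fun ω =>
        (ENNReal.tsum_le_tsum fun n => hpoint n ω).trans
          (tsum_ite_sq_div_two_pow_le_two_mul_abs (Y ω))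

lemma integral_sum_of_identDistrib {ι : Type*} {Z : ι → Ω → ℝ} {Y : Ω → ℝ} {s : Finset ι}
    (hZ : ∀ i ∈ s, Integrable (Z i) μ) (hZY : ∀ i ∈ s, IdentDistrib (Z i) Y μ μ) :
    μ[∑ i ∈ s, Z i] = (#s : ℝ) * μ[Y] := by
  simp_rw [Finset.sum_apply]
  rw [integral_finsetSum s hZ, sum_congr rfl fun i hi => (hZY i hi).integral_eq]
  simp

lemma variance_sum_of_identDistrib {ι : Type*} {Z : ι → Ω → ℝ} {Y : Ω → ℝ} {s : Finset ι}
    (hZ : ∀ i ∈ s, MemLp (Z i) 2 μ) (hindep : Set.Pairwise ↑s fun i j => Z i ⟂ᵢ[μ] Z j)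
    (hZY : ∀ i ∈ s, IdentDistrib (Z i) Y μ μ) :
    Var[∑ i ∈ s, Z i; μ] = #s * Var[Y; μ] := by
  rw [IndepFun.variance_sum hZ hindep, sum_congr rfl fun i hi => (hZY i hi).variance_eq]
  simp

lemma ProbabilityTheory.iIndepFun.pairwise_comp_range {m : ℕ} {X : ℕ → Ω → ℝ}
    (h : iIndepFun (fun i : Fin m => X i) μ) {φ : ℝ → ℝ} (hφ : Measurable φ) :
    Set.Pairwise ↑(range m) fun i j => (φ ∘ X i) ⟂ᵢ[μ] (φ ∘ X j) := by
  intro i hi j hj hij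
  rw [coe_range, Set.mem_Iio] at hi hj
  exact (h.indepFun (i := ⟨i, hi⟩) (j := ⟨j, hj⟩) (by simpa [Fin.ext_iff] using hij)).comp hφ hφ

lemma ae_tendsto_sub_integral_div_of_summable_variance [IsFiniteMeasure μ] {S : ℕ → Ω → ℝ}
    {b : ℕ → ℝ} (hS : ∀ n, MemLp (S n) 2 μ) (hb : ∀ n, 0 < b n)
    (hsum : Summable fun n => Var[S n; μ] / b n ^ 2) :
    ∀ᵐ ω ∂μ, Tendsto (fun n => (S n ω - μ[S n]) / b n) atTop (𝓝 0) := by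
  have hdev : ∀ k : ℕ, ∀ᵐ ω ∂μ, ∀ᶠ n in atTop, |S n ω - μ[S n]| < b n / (k + 1) := by
    intro k
    have hcheb : ∀ n, μ {ω | b n / (k + 1) ≤ |S n ω - μ[S n]|}
        ≤ ENNReal.ofReal ((k + 1) ^ 2 * (Var[S n; μ] / b n ^ 2)) := fun n => by
      refine (meas_ge_le_variance_div_sq (hS n) (by have := hb n; positivity)).trans_eq ?_
      have := (hb n).ne'
      congr 1
      field_simp
    filter_upwards [ae_eventually_notMem ((ENNReal.tsum_le_tsum hcheb).trans_lt
      (hsum.mul_left _).tsum_ofReal_ne_top.lt_top).ne] with ω hω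
    filter_upwards [hω] with n hn
    exact not_le.1 hn
  filter_upwards [ae_all_iff.2 hdev] with ω hω
  rw [NormedAddGroup.tendsto_nhds_zero]
  intro ε hε
  obtain ⟨k, hk⟩ := exists_nat_one_div_lt hε
  filter_upwards [hω k] with n hn
  rw [Real.norm_eq_abs, abs_div, abs_of_pos (hb n), div_lt_iff₀ (hb n)]
  calc |S n ω - μ[S n]| < b n / (k + 1) := hn
    _ = 1 / (k + 1) * b n := by ring
    _ ≤ ε * b n := by gcongr; exact (hb n).le

lemma ae_tendsto_truncated_row_average_sub [IsProbabilityMeasure μ] {X : ℕ → ℕ → Ω → ℝ}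
    {Y : Ω → ℝ} (hY : Integrable Y μ) (hXY : ∀ n i, i < 2 ^ n → IdentDistrib (X n i) Y μ μ)
    (hindep : ∀ n, iIndepFun (fun i : Fin (2 ^ n) => X n i) μ) :
    ∀ᵐ ω ∂μ, Tendsto (fun n : ℕ => (∑ i ∈ range (2 ^ n), truncation (X n i) (2 ^ n) ω) / 2 ^ n
      - μ[truncation Y (2 ^ n)]) atTop (𝓝 0) := by
  set S : ℕ → Ω → ℝ := fun n => ∑ i ∈ range (2 ^ n), truncation (X n i) (2 ^ n)
  have hL2 : ∀ n, ∀ i ∈ range (2 ^ n), MemLp (truncation (X n i) (2 ^ n)) 2 μ := fun n i hi =>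
    (hXY n i (mem_range.1 hi)).aestronglyMeasurable_fst.memLp_truncation
  have htrunc : ∀ n, ∀ i ∈ range (2 ^ n),
      IdentDistrib (truncation (X n i) (2 ^ n)) (truncation Y (2 ^ n)) μ μ :=
    fun n i hi => (hXY n i (mem_range.1 hi)).truncation
  have hmean : ∀ n, μ[S n] = 2 ^ n * μ[truncation Y (2 ^ n)] := fun n => by
    simpa [S] using integral_sum_of_identDistrib (fun i hi => (hL2 n i hi).integrable one_le_two)
      (htrunc n)
  have hvar : Summable fun n => Var[S n; μ] / (2 ^ n) ^ 2 := by
    refine (summable_integral_sq_truncation_two_pow_div hY).of_nonneg_of_le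
      (fun n => div_nonneg (variance_nonneg _ _) (by positivity)) fun n => ?_
    rw [variance_sum_of_identDistrib (hL2 n)
      ((hindep n).pairwise_comp_range (measurable_id.indicator measurableSet_Ioc)) (htrunc n),
      card_range, Nat.cast_pow, Nat.cast_ofNat, pow_two, mul_div_mul_left _ _ (by positivity)]
    gcongr
    exact variance_le_expectation_sq hY.1.truncation
  filter_upwards [ae_tendsto_sub_integral_div_of_summable_variance
    (fun n => memLp_finsetSum' _ (hL2 n)) (fun n => by positivity) hvar] with ω hω
  refine hω.congr fun n => ?_
  rw [hmean, Finset.sum_apply]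
  field_simp

end

/-- Strong law of large numbers for triangular arrays: if `{X n i : i < 2^n}` are
identically distributed, integrable, mean-zero real random variables that are
independent within each row `n`, then `2^{-n} ∑_{i<2^n} X n i → 0` almost surely. -/
theorem sl_triangular_array {Ω : Type*} [MeasurableSpace Ω] (P : Measure Ω)
    [IsProbabilityMeasure P] (X : ℕ → ℕ → Ω → ℝ)
    (hmeas : ∀ n i, i < 2 ^ n → Measurable (X n i))
    (hident : ∀ n i, i < 2 ^ n → Measure.map (X n i) P = Measure.map (X 0 0) P)
    (hint : Integrable (X 0 0) P)
    (hmean : ∫ ω, X 0 0 ω ∂P = 0)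
    (hindep : ∀ n, iIndepFun
      (fun i : Fin (2 ^ n) => X n i) P) :
    ∀ᵐ ω ∂P, Tendsto (fun n => ((2 : ℝ) ^ n)⁻¹ * ∑ i ∈ Finset.range (2 ^ n), X n i ω)
      atTop (nhds 0) := by
  have hXY : ∀ n i, i < 2 ^ n → IdentDistrib (X n i) (X 0 0) P P := fun n i hi =>
    ⟨(hmeas n i hi).aemeasurable, (hmeas 0 0 Nat.one_pos).aemeasurable, hident n i hi⟩
  have hlim : Tendsto (fun n : ℕ => P[truncation (X 0 0) (2 ^ n)]) atTop (𝓝 0) :=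
    hmean ▸ (tendsto_integral_truncation hint).comp (tendsto_pow_atTop_atTop_of_one_lt one_lt_two)
  filter_upwards [ae_eventually_forall_abs_lt_two_pow hint hXY,
    ae_tendsto_truncated_row_average_sub hint hXY hindep] with ω hsmall hdev
  have hconv := hdev.add hlim
  rw [zero_add] at hconv
  refine hconv.congr' ?_
  filter_upwards [hsmall] with n hn
  rw [sub_add_cancel, sum_congr rfl fun i hi => truncation_eq_self (hn i (mem_range.1 hi)),
    div_eq_inv_mul]
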